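/- arXiv:1901.01378 — 4 statements merged into one kernel-verified Lean document; each statement's English description precedes it below -/
import Mathlib

section
/- For positive definite matrices A and B, tr(A # B) ≤ tr(A^{1/2}B^{1/2}) ≤ tr((AB)^{1/2}), where A # B = A^{1/2}(A^{-1/2}BA^{-1/2})^{1/2}A^{1/2} is the geometric mean. -/
open scoped ComplexOrder
open MeasureTheory

/-- The positive semidefinite square root of a matrix (zero if not positive semidefinite). -/
noncomputable def msqrt {N : ℕ} (A : Matrix (Fin N) (Fin N) ℂ) : Matrix (Fin N) (Fin N) ℂ :=
  by classical exact if h : A.PosSemidef then (h.1.eigenvectorUnitary : Matrix (Fin N) (Fin N) ℂ) *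
    Matrix.diagonal ((↑) ∘ (√·) ∘ h.1.eigenvalues) *
    (star h.1.eigenvectorUnitary : Matrix (Fin N) (Fin N) ℂ) else 0

/-- The Pusz–Woronowicz geometric mean `A # B = A^{1/2} (A^{-1/2} B A^{-1/2})^{1/2} A^{1/2}`. -/
noncomputable def geom {N : ℕ} (A B : Matrix (Fin N) (Fin N) ℂ) : Matrix (Fin N) (Fin N) ℂ :=
  msqrt A * msqrt ((msqrt A)⁻¹ * B * (msqrt A)⁻¹) * msqrt A

/-- The logarithm of a Hermitian matrix, via the spectral theorem (zero if not Hermitian). -/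
noncomputable def mlog {N : ℕ} (A : Matrix (Fin N) (Fin N) ℂ) : Matrix (Fin N) (Fin N) ℂ :=
  by classical exact if h : A.IsHermitian then h.cfc Real.log else 0

/-- The log Euclidean mean `exp((log A + log B)/2)`. -/
noncomputable def logEuclid {N : ℕ} (A B : Matrix (Fin N) (Fin N) ℂ) : Matrix (Fin N) (Fin N) ℂ :=
  NormedSpace.exp ((2:ℂ)⁻¹ • (mlog A + mlog B))

/-!
Write `X = A^{1/2}` and `Y = B^{1/2}`. Both inequalities rest on `|tr (P U)| ≤ tr P` for `P ≥ 0`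
and `U` unitary, which is Cauchy–Schwarz for the Frobenius inner product applied to a square
root of `P`. For the right one, polar decomposition gives `Y X = U |Y X|` with
`|Y X| = (X B X)^{1/2}`, so `tr (X Y) ≤ tr |Y X|`, and conjugating by `X` does not change the trace.
For the left one, `G = A # B` solves the Riccati equation `G A⁻¹ G = B`, which makes
`W = X⁻¹ G Y⁻¹` unitary with `G = X W Y`; Cauchy–Schwarz then gives
`(tr G)² ≤ tr (G W*) · tr (X Y) ≤ tr G · tr (X Y)`.
-/

open Matrix
open scoped MatrixOrder

lemma Complex.le_of_re_le_of_nonneg {z w : ℂ} (hz : 0 ≤ z) (hw : 0 ≤ w) (h : z.re ≤ w.re) :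
    z ≤ w :=
  Complex.le_def.mpr ⟨h, (Complex.nonneg_iff.mp hz).2.symm.trans (Complex.nonneg_iff.mp hw).2⟩

namespace Matrix

variable {n : Type*} [Fintype n]

lemma norm_trace_mul_conjTranspose_sq_le (M N : Matrix n n ℂ) :
    ‖(N * Mᴴ).trace‖ ^ 2 ≤ (M * Mᴴ).trace.re * (N * Nᴴ).trace.re := by
  classical
  -- the inner product induced by `1` is the Frobenius one, `⟪M, N⟫ = tr (N Mᴴ)`
  let := toMatrixSeminormedAddCommGroup (1 : Matrix n n ℂ) PosSemidef.one
  let := toMatrixInnerProductSpace (1 : Matrix n n ℂ) PosSemidef.one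
  have h : ‖(N * 1 * Mᴴ).trace‖ * ‖(M * 1 * Nᴴ).trace‖ ≤
      (M * 1 * Mᴴ).trace.re * (N * 1 * Nᴴ).trace.re :=
    inner_mul_inner_self_le (𝕜 := ℂ) M N
  have hsymm : ‖(M * Nᴴ).trace‖ = ‖(N * Mᴴ).trace‖ := by
    simpa using congrArg norm (trace_conjTranspose (N * Mᴴ))
  simpa only [Matrix.mul_one, hsymm, ← sq] using h

variable [DecidableEq n]

lemma mul_nonsing_inv_mem_unitaryGroup {R : Type*} [CommRing R] [StarRing R]
    {M N : Matrix n n R} (hN : IsUnit N.det) (h : Mᴴ * M = Nᴴ * N) :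
    M * N⁻¹ ∈ unitaryGroup n R := by
  rw [mem_unitaryGroup_iff', star_eq_conjTranspose]
  calc (M * N⁻¹)ᴴ * (M * N⁻¹) = N⁻¹ᴴ * (Mᴴ * M) * N⁻¹ := by
        simp only [conjTranspose_mul, Matrix.mul_assoc]
    _ = (N * N⁻¹)ᴴ * (N * N⁻¹) := by
        rw [h, conjTranspose_mul N]; simp only [Matrix.mul_assoc]
    _ = 1 := by rw [mul_nonsing_inv _ hN, conjTranspose_one, Matrix.one_mul]

lemma PosSemidef.exists_eq_conjTranspose_mul_self {P : Matrix n n ℂ} (hP : P.PosSemidef) :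
    ∃ C : Matrix n n ℂ, P = Cᴴ * C := by
  refine ⟨CFC.sqrt P, ?_⟩
  rw [(nonneg_iff_posSemidef.mp (CFC.sqrt_nonneg P)).1.eq, CFC.sqrt_mul_sqrt_self P hP.nonneg]

lemma PosSemidef.trace_mul_nonneg {X Y : Matrix n n ℂ} (hX : X.PosSemidef) (hY : Y.PosSemidef) :
    0 ≤ (X * Y).trace := by
  obtain ⟨C, rfl⟩ := hX.exists_eq_conjTranspose_mul_self
  rw [Matrix.mul_assoc, trace_mul_comm]
  exact (hY.mul_mul_conjTranspose_same C).trace_nonneg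

lemma PosSemidef.norm_trace_mul_le {P U : Matrix n n ℂ} (hP : P.PosSemidef)
    (hU : U ∈ unitaryGroup n ℂ) : ‖(P * U).trace‖ ≤ P.trace.re := by
  obtain ⟨C, rfl⟩ := hP.exists_eq_conjTranspose_mul_self
  have hCU : C * U * (C * U)ᴴ = C * Cᴴ := by
    rw [conjTranspose_mul, Matrix.mul_assoc, ← Matrix.mul_assoc U, ← star_eq_conjTranspose U,
      mem_unitaryGroup_iff.mp hU, Matrix.one_mul]
  have hcs := norm_trace_mul_conjTranspose_sq_le C (C * U)
  rw [hCU, ← sq, trace_mul_comm C] at hcs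
  rw [Matrix.mul_assoc, trace_mul_comm]
  have htr := (Complex.nonneg_iff.mp (posSemidef_conjTranspose_mul_self C).trace_nonneg).1
  exact (pow_le_pow_iff_left₀ (norm_nonneg _) htr two_ne_zero).mp hcs

lemma norm_trace_le_trace_of_mul_self_eq {M R : Matrix n n ℂ} (hR : R.PosSemidef)
    (hRu : IsUnit R.det) (h : R * R = Mᴴ * M) : ‖M.trace‖ ≤ R.trace.re := by
  have hU : M * R⁻¹ ∈ unitaryGroup n ℂ :=
    mul_nonsing_inv_mem_unitaryGroup hRu (by rw [hR.1.eq, h])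
  have hM : M.trace = (R * (M * R⁻¹)).trace := by
    rw [trace_mul_comm, Matrix.mul_assoc, nonsing_inv_mul _ hRu, Matrix.mul_one]
  exact hM ▸ hR.norm_trace_mul_le hU

lemma trace_mul_unitary_mul_le {X Y W : Matrix n n ℂ} (hX : X.PosSemidef) (hY : Y.PosSemidef)
    (hW : W ∈ unitaryGroup n ℂ) (hG : (X * W * Y).PosSemidef) :
    (X * W * Y).trace ≤ (X * Y).trace := by
  obtain ⟨P, rfl⟩ := hX.exists_eq_conjTranspose_mul_self
  obtain ⟨Q, rfl⟩ := hY.exists_eq_conjTranspose_mul_self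
  have hcs := norm_trace_mul_conjTranspose_sq_le (Q * Wᴴ * Pᴴ) (Q * Pᴴ)
  have htrG : (Q * Pᴴ * (Q * Wᴴ * Pᴴ)ᴴ).trace = (Pᴴ * P * W * (Qᴴ * Q)).trace := by
    simp only [conjTranspose_mul, conjTranspose_conjTranspose, Matrix.mul_assoc]
    rw [trace_mul_comm Q]; simp only [Matrix.mul_assoc]
  have htrGW : (Q * Wᴴ * Pᴴ * (Q * Wᴴ * Pᴴ)ᴴ).trace = (Pᴴ * P * W * (Qᴴ * Q) * Wᴴ).trace := by
    simp only [conjTranspose_mul, conjTranspose_conjTranspose, Matrix.mul_assoc]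
    rw [trace_mul_comm Q, Matrix.mul_assoc, trace_mul_comm Wᴴ]; simp only [Matrix.mul_assoc]
  have htrXY : (Q * Pᴴ * (Q * Pᴴ)ᴴ).trace = (Pᴴ * P * (Qᴴ * Q)).trace := by
    simp only [conjTranspose_mul, conjTranspose_conjTranspose, Matrix.mul_assoc]
    rw [trace_mul_comm Q]; simp only [Matrix.mul_assoc]
  rw [htrG, htrGW, htrXY] at hcs
  have hg := hG.trace_nonneg
  have hm := hX.trace_mul_nonneg hY
  have hGW : (Pᴴ * P * W * (Qᴴ * Q) * Wᴴ).trace.re ≤ (Pᴴ * P * W * (Qᴴ * Q)).trace.re :=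
    (Complex.re_le_norm _).trans (hG.norm_trace_mul_le (Unitary.star_mem hW))
  rw [← Complex.re_eq_norm.mpr hg] at hcs
  refine Complex.le_of_re_le_of_nonneg hg hm ?_
  have hm₀ := (Complex.nonneg_iff.mp hm).1
  nlinarith [hcs.trans (mul_le_mul_of_nonneg_right hGW hm₀)]

end Matrix

section msqrt

variable {N : ℕ}

lemma msqrt_eq_sqrt {A : Matrix (Fin N) (Fin N) ℂ} (hA : A.PosSemidef) : msqrt A = CFC.sqrt A := by
  rw [CFC.sqrt_eq_real_sqrt A hA.nonneg, cfcₙ_eq_cfc, hA.1.cfc_eq, msqrt, dif_pos hA]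
  rfl

lemma posSemidef_msqrt (A : Matrix (Fin N) (Fin N) ℂ) : (msqrt A).PosSemidef := by
  by_cases hA : A.PosSemidef
  · exact msqrt_eq_sqrt hA ▸ nonneg_iff_posSemidef.mp (CFC.sqrt_nonneg A)
  · rw [msqrt, dif_neg hA]
    exact PosSemidef.zero

lemma msqrt_mul_msqrt_self {A : Matrix (Fin N) (Fin N) ℂ} (hA : A.PosSemidef) :
    msqrt A * msqrt A = A := by
  rw [msqrt_eq_sqrt hA, CFC.sqrt_mul_sqrt_self A hA.nonneg]

lemma isUnit_det_msqrt {A : Matrix (Fin N) (Fin N) ℂ} (hA : A.PosSemidef) (hdet : IsUnit A.det) :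
    IsUnit (msqrt A).det :=
  isUnit_of_mul_isUnit_left (by rwa [← det_mul, msqrt_mul_msqrt_self hA])

lemma Matrix.PosDef.isUnit_det_msqrt {A : Matrix (Fin N) (Fin N) ℂ} (hA : A.PosDef) :
    IsUnit (msqrt A).det :=
  _root_.isUnit_det_msqrt hA.posSemidef ((isUnit_iff_isUnit_det _).mp hA.isUnit)

lemma msqrt_inv_mul_msqrt_inv {A : Matrix (Fin N) (Fin N) ℂ} (hA : A.PosSemidef) :
    (msqrt A)⁻¹ * (msqrt A)⁻¹ = A⁻¹ := by
  rw [← Matrix.mul_inv_rev, msqrt_mul_msqrt_self hA]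

lemma posSemidef_geom (A B : Matrix (Fin N) (Fin N) ℂ) : (geom A B).PosSemidef := by
  simpa only [geom, (posSemidef_msqrt A).1.eq] using
    (posSemidef_msqrt ((msqrt A)⁻¹ * B * (msqrt A)⁻¹)).conjTranspose_mul_mul_same (msqrt A)

lemma geom_mul_inv_mul_geom {A B : Matrix (Fin N) (Fin N) ℂ} (hA : A.PosDef) (hB : B.PosSemidef) :
    geom A B * A⁻¹ * geom A B = B := by
  have hXu := hA.isUnit_det_msqrt
  have hC : ((msqrt A)⁻¹ * B * (msqrt A)⁻¹).PosSemidef := by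
    simpa only [conjTranspose_nonsing_inv, (posSemidef_msqrt A).1.eq] using
      hB.conjTranspose_mul_mul_same (msqrt A)⁻¹
  have hSS := msqrt_mul_msqrt_self hC
  rw [geom, ← msqrt_inv_mul_msqrt_inv hA.posSemidef]
  generalize msqrt ((msqrt A)⁻¹ * B * (msqrt A)⁻¹) = S at hSS ⊢
  calc msqrt A * S * msqrt A * ((msqrt A)⁻¹ * (msqrt A)⁻¹) * (msqrt A * S * msqrt A)
      = msqrt A * (S * S) * msqrt A := by
        simp only [Matrix.mul_assoc, mul_nonsing_inv_cancel_left _ _ hXu,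
          nonsing_inv_mul_cancel_left _ _ hXu]
    _ = B := by
        rw [hSS]
        simp only [Matrix.mul_assoc, mul_nonsing_inv_cancel_left _ _ hXu, nonsing_inv_mul _ hXu,
          Matrix.mul_one]

lemma geom_eq_msqrt_mul_unitary_mul_msqrt {A B : Matrix (Fin N) (Fin N) ℂ} (hA : A.PosDef)
    (hB : B.PosDef) : ∃ W ∈ unitaryGroup (Fin N) ℂ, geom A B = msqrt A * W * msqrt B := by
  have hXu := hA.isUnit_det_msqrt
  have hYu := hB.isUnit_det_msqrt
  have hW : ((msqrt A)⁻¹ * geom A B)ᴴ * ((msqrt A)⁻¹ * geom A B) = (msqrt B)ᴴ * msqrt B :=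
    calc ((msqrt A)⁻¹ * geom A B)ᴴ * ((msqrt A)⁻¹ * geom A B) = geom A B * A⁻¹ * geom A B := by
          rw [conjTranspose_mul, conjTranspose_nonsing_inv, (posSemidef_msqrt A).1.eq,
            (posSemidef_geom A B).1.eq, ← msqrt_inv_mul_msqrt_inv hA.posSemidef]
          simp only [Matrix.mul_assoc]
      _ = (msqrt B)ᴴ * msqrt B := by
          rw [geom_mul_inv_mul_geom hA hB.posSemidef, (posSemidef_msqrt B).1.eq,
            msqrt_mul_msqrt_self hB.posSemidef]
  refine ⟨(msqrt A)⁻¹ * geom A B * (msqrt B)⁻¹, mul_nonsing_inv_mem_unitaryGroup hYu hW, ?_⟩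
  simp only [Matrix.mul_assoc, mul_nonsing_inv_cancel_left _ _ hXu, nonsing_inv_mul _ hYu,
    Matrix.mul_one]

lemma trace_geom_le {A B : Matrix (Fin N) (Fin N) ℂ} (hA : A.PosDef) (hB : B.PosDef) :
    (geom A B).trace ≤ (msqrt A * msqrt B).trace := by
  obtain ⟨W, hW, hG⟩ := geom_eq_msqrt_mul_unitary_mul_msqrt hA hB
  rw [hG]
  exact trace_mul_unitary_mul_le (posSemidef_msqrt A) (posSemidef_msqrt B) hW
    (hG ▸ posSemidef_geom A B)

lemma trace_msqrt_mul_msqrt_le {A B : Matrix (Fin N) (Fin N) ℂ} (hA : A.PosDef)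
    (hB : B.PosDef) : (msqrt A * msqrt B).trace ≤ (msqrt (msqrt A * B * msqrt A)).trace := by
  have hX := posSemidef_msqrt A
  have hY := posSemidef_msqrt B
  have hXBX : (msqrt A * B * msqrt A).PosSemidef := by
    simpa only [hX.1.eq] using hB.posSemidef.conjTranspose_mul_mul_same (msqrt A)
  have hR : msqrt (msqrt A * B * msqrt A) * msqrt (msqrt A * B * msqrt A) =
      (msqrt B * msqrt A)ᴴ * (msqrt B * msqrt A) := by
    rw [msqrt_mul_msqrt_self hXBX, conjTranspose_mul, hX.1.eq, hY.1.eq]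
    simp only [Matrix.mul_assoc]
    rw [← Matrix.mul_assoc (msqrt B) (msqrt B), msqrt_mul_msqrt_self hB.posSemidef]
  have hRu : IsUnit (msqrt (msqrt A * B * msqrt A)).det := by
    refine isUnit_det_msqrt hXBX ?_
    simpa only [det_mul] using
      (hA.isUnit_det_msqrt.mul ((isUnit_iff_isUnit_det _).mp hB.isUnit)).mul hA.isUnit_det_msqrt
  refine Complex.le_of_re_le_of_nonneg (hX.trace_mul_nonneg hY) (posSemidef_msqrt _).trace_nonneg ?_
  calc (msqrt A * msqrt B).trace.re ≤ ‖(msqrt B * msqrt A).trace‖ :=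
        trace_mul_comm (msqrt A) (msqrt B) ▸ Complex.re_le_norm _
    _ ≤ _ := norm_trace_le_trace_of_mul_self_eq (posSemidef_msqrt _) hRu hR

end msqrt

theorem stmt1 {N : ℕ} (A B : Matrix (Fin N) (Fin N) ℂ) (hA : A.PosDef) (hB : B.PosDef) :
    (geom A B).trace ≤ (msqrt A * msqrt B).trace ∧
    (msqrt A * msqrt B).trace ≤
      (msqrt A * msqrt (msqrt A * B * msqrt A) * (msqrt A)⁻¹).trace := by
  refine ⟨trace_geom_le hA hB, ?_⟩
  rw [trace_mul_cycle, nonsing_inv_mul _ hA.isUnit_det_msqrt, Matrix.one_mul]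
  exact trace_msqrt_mul_msqrt_le hA hB
end

section
/- For every positive real number x, x^{1/2} = 1/√2 + ∫₀^∞ (λ/(λ²+1) − 1/(λ+x)) dν(λ), where dν(λ) = (1/π) λ^{1/2} dλ. -/
open MeasureTheory Real Set Filter Topology

/-!
Substituting `l = t ^ 2` turns the integrand into `(2 / π) (x / (x + t²) - 1 / (1 + t⁴))`.
The first term integrates to `π √x / 2` by `arctan`. For the second, `t ↦ 1 / t` exchanges
`1 / (1 + t⁴)` and `t² / (1 + t⁴)`, and their sum `(1 + t²) / (1 + t⁴)` has the bounded
antiderivative `(arctan (√2 t + 1) + arctan (√2 t - 1)) / √2`, so `∫₀^∞ 1 / (1 + t⁴) = π / (2 √2)`.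
-/

theorem integrableOn_Ioi_inv_one_add_mul_sq {b : ℝ} (hb : 0 < b) :
    IntegrableOn (fun t : ℝ => (1 + (b * t) ^ 2)⁻¹) (Ioi 0) :=
  (integrableOn_Ioi_comp_mul_left_iff (fun t : ℝ => (1 + t ^ 2)⁻¹) 0 hb).2
    integrable_inv_one_add_sq.integrableOn

theorem integral_Ioi_inv_one_add_mul_sq {b : ℝ} (hb : 0 < b) :
    ∫ t in Ioi 0, (1 + (b * t) ^ 2)⁻¹ = π / (2 * b) := by
  rw [integral_comp_mul_left_Ioi (fun t : ℝ => (1 + t ^ 2)⁻¹) 0 hb, mul_zero,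
    integral_Ioi_inv_one_add_sq, arctan_zero, smul_eq_mul]
  field_simp
  ring

theorem hasDerivAt_arctan_add_arctan (t : ℝ) :
    HasDerivAt (fun t => arctan (√2 * t + 1) + arctan (√2 * t - 1))
      (√2 * ((1 + t ^ 2) / (1 + t ^ 4))) t := by
  have hlin : HasDerivAt (fun t => √2 * t) √2 t := by
    simpa using (hasDerivAt_id t).const_mul √2
  refine ((hlin.add_const 1).arctan.add (hlin.sub_const 1).arctan).congr_deriv ?_
  have h2 : √2 ^ 2 = 2 := sq_sqrt (by norm_num)
  have hp : 0 < 1 + (√2 * t + 1) ^ 2 := by positivity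
  have hm : 0 < 1 + (√2 * t - 1) ^ 2 := by positivity
  field_simp
  linear_combination (2 * t ^ 2 - t ^ 6 * √2 ^ 2 - t ^ 4 * (√2 ^ 2 + 2)) * h2

theorem tendsto_arctan_add_arctan_atTop :
    Tendsto (fun t => arctan (√2 * t + 1) + arctan (√2 * t - 1)) atTop (𝓝 π) := by
  have hlin : Tendsto (fun t : ℝ => √2 * t) atTop atTop :=
    tendsto_id.const_mul_atTop (by positivity)
  have harctan := tendsto_arctan_atTop.mono_right nhdsWithin_le_nhds
  simpa [← sub_eq_add_neg] using (harctan.comp (tendsto_atTop_add_const_right _ 1 hlin)).add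
    (harctan.comp (tendsto_atTop_add_const_right _ (-1) hlin))

theorem integrableOn_Ioi_one_add_sq_div_one_add_pow_four :
    IntegrableOn (fun t : ℝ => (1 + t ^ 2) / (1 + t ^ 4)) (Ioi 0) := by
  have h := integrableOn_Ioi_deriv_of_nonneg' (a := 0)
    (fun t _ => hasDerivAt_arctan_add_arctan t) (fun t _ => by positivity)
    tendsto_arctan_add_arctan_atTop
  simpa [IntegrableOn] using h.const_mul (√2)⁻¹

theorem integral_Ioi_one_add_sq_div_one_add_pow_four :
    ∫ t in Ioi 0, (1 + t ^ 2) / (1 + t ^ 4) = π / √2 := by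
  have h := integral_Ioi_of_hasDerivAt_of_nonneg' (a := 0)
    (fun t _ => hasDerivAt_arctan_add_arctan t) (fun t _ => by positivity)
    tendsto_arctan_add_arctan_atTop
  rw [integral_const_mul] at h
  simp only [mul_zero, zero_add, zero_sub, arctan_one, arctan_neg, add_neg_cancel, sub_zero] at h
  rw [eq_div_iff (by positivity), mul_comm, h]

theorem integral_Ioi_inv_sq_smul_comp_inv {E : Type*} [NormedAddCommGroup E] [NormedSpace ℝ E]
    (g : ℝ → E) : ∫ t in Ioi 0, (t ^ 2)⁻¹ • g t⁻¹ = ∫ t in Ioi 0, g t := by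
  rw [← integral_comp_rpow_Ioi g (p := -1) (by norm_num)]
  refine setIntegral_congr_fun measurableSet_Ioi fun t ht => ?_
  have : t ^ (-1 - 1 : ℝ) = (t ^ 2)⁻¹ := by
    rw [show (-1 - 1 : ℝ) = -(2 : ℕ) by norm_num, rpow_neg (le_of_lt ht), rpow_natCast]
  simp [this, rpow_neg_one]

theorem integral_Ioi_sq_div_one_add_pow_four_eq :
    ∫ t in Ioi (0 : ℝ), t ^ 2 / (1 + t ^ 4) = ∫ t in Ioi 0, (1 + t ^ 4)⁻¹ := by
  rw [← integral_Ioi_inv_sq_smul_comp_inv]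
  refine setIntegral_congr_fun measurableSet_Ioi fun t ht => ?_
  have : t ≠ 0 := ne_of_gt ht
  simp only [smul_eq_mul, inv_pow]
  field_simp
  ring

theorem integrableOn_Ioi_inv_one_add_pow_four :
    IntegrableOn (fun t : ℝ => (1 + t ^ 4)⁻¹) (Ioi 0) := by
  refine integrableOn_Ioi_one_add_sq_div_one_add_pow_four.mono' (by fun_prop) ?_
  filter_upwards with t
  rw [norm_inv, Real.norm_of_nonneg (by positivity), inv_eq_one_div]
  gcongr
  nlinarith [sq_nonneg t]

theorem integral_Ioi_inv_one_add_pow_four :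
    ∫ t in Ioi 0, (1 + t ^ 4)⁻¹ = π / (2 * √2) := by
  have hsplit : ∀ t : ℝ, (1 + t ^ 2) / (1 + t ^ 4) = (1 + t ^ 4)⁻¹ + t ^ 2 / (1 + t ^ 4) :=
    fun t => by ring
  have hsq : IntegrableOn (fun t : ℝ => t ^ 2 / (1 + t ^ 4)) (Ioi 0) := by
    refine (integrableOn_Ioi_one_add_sq_div_one_add_pow_four.sub
      integrableOn_Ioi_inv_one_add_pow_four).congr_fun (fun t _ => ?_) measurableSet_Ioi
    simp only [Pi.sub_apply, hsplit]
    ring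
  have h := integral_Ioi_one_add_sq_div_one_add_pow_four
  simp_rw [hsplit] at h
  rw [integral_add integrableOn_Ioi_inv_one_add_pow_four hsq,
    integral_Ioi_sq_div_one_add_pow_four_eq] at h
  rw [div_mul_eq_div_div_swap, ← h]
  ring

theorem stmt7 (x : ℝ) (hx : 0 < x) :
    Real.sqrt x = 1 / Real.sqrt 2 +
      ∫ l in Set.Ioi (0:ℝ),
        (l / (l ^ 2 + 1) - 1 / (l + x)) * (Real.pi⁻¹ * Real.sqrt l) := by
  have hb : 0 < (√x)⁻¹ := by positivity
  have hsubst : ∀ t ∈ Ioi (0 : ℝ),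
      (2 * t ^ (2 - 1 : ℝ)) • ((t ^ (2 : ℝ) / ((t ^ (2 : ℝ)) ^ 2 + 1) - 1 / (t ^ (2 : ℝ) + x)) *
        (π⁻¹ * √(t ^ (2 : ℝ))))
      = 2 * π⁻¹ * ((1 + ((√x)⁻¹ * t) ^ 2)⁻¹ - (1 + t ^ 4)⁻¹) := by
    intro t ht
    have hx' : √x ^ 2 = x := sq_sqrt hx.le
    rw [show (2 - 1 : ℝ) = 1 by norm_num, rpow_one, rpow_two, sqrt_sq (le_of_lt ht),
      smul_eq_mul]
    field_simp
    rw [hx']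
    ring
  rw [← integral_comp_rpow_Ioi_of_pos two_pos, setIntegral_congr_fun measurableSet_Ioi hsubst,
    integral_const_mul, integral_sub (integrableOn_Ioi_inv_one_add_mul_sq hb)
      integrableOn_Ioi_inv_one_add_pow_four, integral_Ioi_inv_one_add_mul_sq hb,
    integral_Ioi_inv_one_add_pow_four]
  field_simp
  ring
end

section
/- Let φ : ℝⁿ → ℝ be differentiable and strictly convex, Φ(x,y) = φ(x) − φ(y) − ⟨∇φ(y), x − y⟩ the associated Bregman divergence, and a₁,…,a_m given points. Then the arithmetic mean ā = (1/m)∑ aⱼ is the unique minimiser of x ↦ (1/m)∑ⱼ Φ(aⱼ, x). -/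
lemma grad_lt_aux {d : ℕ} {φ : (Fin d → ℝ) → ℝ} (hdiff : Differentiable ℝ φ)
    (hconv : StrictConvexOn ℝ Set.univ φ) {x y : Fin d → ℝ} (hxy : x ≠ y) :
    fderiv ℝ φ x (y - x) < φ y - φ x := by
  set v := y - x with hv
  have hvne : v ≠ 0 := sub_ne_zero.mpr (Ne.symm hxy)
  set g : ℝ → ℝ := fun t => φ (x + t • v) with hg
  have hgd : ∀ t : ℝ, HasDerivAt g (fderiv ℝ φ (x + t • v) v) t := by
    intro t
    have h1 : HasDerivAt (fun t : ℝ => x + t • v) v t := by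
      simpa using ((hasDerivAt_id t).smul_const v).const_add x
    exact ((hdiff (x + t • v)).hasFDerivAt.comp_hasDerivAt t h1)
  have hgconv : StrictConvexOn ℝ Set.univ g := by
    refine ⟨convex_univ, ?_⟩
    intro s _ t _ hst l1 l2 hl1 hl2 hsum
    have hne : x + s • v ≠ x + t • v := by
      intro h
      apply hst
      have := add_left_cancel h
      have h2 : (s - t) • v = 0 := by rw [sub_smul, this, sub_self]
      rcases smul_eq_zero.mp h2 with h3 | h3
      · exact sub_eq_zero.mp h3
      · exact absurd h3 hvne
    have key := hconv.2 (Set.mem_univ (x + s • v)) (Set.mem_univ (x + t • v)) hne hl1 hl2 hsum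
    have heq : l1 • (x + s • v) + l2 • (x + t • v) = x + (l1 • s + l2 • t) • v := by
      have h1 : l2 = 1 - l1 := by linarith
      subst h1
      simp only [smul_eq_mul]
      module
    calc g (l1 • s + l2 • t) = φ (l1 • (x + s • v) + l2 • (x + t • v)) := by rw [heq]
      _ < l1 • g s + l2 • g t := key
  have := hgconv.lt_slope_of_hasDerivAt (Set.mem_univ (0:ℝ)) (Set.mem_univ (1:ℝ))
    zero_lt_one (hgd 0)
  simp only [slope_def_field, g] at this
  have hxy' : x + (1:ℝ) • v = y := by simp [hv]
  have hx0 : x + (0:ℝ) • v = x := by simp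
  rw [hxy', hx0] at this
  simpa [div_one] using this

/-- For a differentiable strictly convex `φ : ℝⁿ → ℝ` with Bregman divergence
`Φ(x,y) = φ(x) - φ(y) - ⟨∇φ(y), x - y⟩`, the arithmetic mean `ā = (1/m)∑ aⱼ` is the unique
minimiser of `x ↦ (1/m)∑ⱼ Φ(aⱼ, x)`. -/
theorem stmt15 {d m : ℕ} (hm : 0 < m)
    (φ : (Fin d → ℝ) → ℝ) (hdiff : Differentiable ℝ φ)
    (hconv : StrictConvexOn ℝ Set.univ φ)
    (a : Fin m → (Fin d → ℝ))
    (Φ : (Fin d → ℝ) → (Fin d → ℝ) → ℝ)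
    (hΦ : ∀ x y, Φ x y = φ x - φ y - fderiv ℝ φ y (x - y)) :
    ∀ x : Fin d → ℝ, x ≠ (m:ℝ)⁻¹ • ∑ j, a j →
      (m:ℝ)⁻¹ * ∑ j, Φ (a j) ((m:ℝ)⁻¹ • ∑ i, a i) < (m:ℝ)⁻¹ * ∑ j, Φ (a j) x := by
  intro x hx
  set xb : Fin d → ℝ := (m:ℝ)⁻¹ • ∑ j, a j with hxb
  have hmne : (m:ℝ) ≠ 0 := Nat.cast_ne_zero.mpr hm.ne'
  have hmxb : (m:ℝ) • xb = ∑ j, a j := by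
    rw [hxb, smul_smul, mul_inv_cancel₀ hmne, one_smul]
  have key : ∀ y : Fin d → ℝ,
      ∑ j, Φ (a j) y = (∑ j, φ (a j)) - m * φ y - fderiv ℝ φ y (∑ j, a j - (m:ℝ) • y) := by
    intro y
    simp only [hΦ]
    rw [Finset.sum_sub_distrib, Finset.sum_sub_distrib, Finset.sum_const, Finset.card_univ,
      Fintype.card_fin, ← map_sum]
    congr 2
    · simp [nsmul_eq_mul]
    · rw [Finset.sum_sub_distrib, Finset.sum_const, Finset.card_univ, Fintype.card_fin]
      exact congrArg _ (Nat.cast_smul_eq_nsmul ℝ m y).symm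
  have h1 : ∑ j, Φ (a j) xb = (∑ j, φ (a j)) - m * φ xb := by
    rw [key, hmxb, sub_self, map_zero, sub_zero]
  have h2 : ∑ j, Φ (a j) x = (∑ j, φ (a j)) - m * φ x - m * fderiv ℝ φ x (xb - x) := by
    rw [key]
    congr 1
    have : (∑ j, a j) - (m:ℝ) • x = (m:ℝ) • (xb - x) := by
      rw [smul_sub, hmxb]
    rw [this, map_smul, smul_eq_mul]
  have hgrad : fderiv ℝ φ x (xb - x) < φ xb - φ x := grad_lt_aux hdiff hconv hx
  have hc : (0:ℝ) < (m:ℝ)⁻¹ := by positivity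
  have hcm : (m:ℝ)⁻¹ * m = 1 := inv_mul_cancel₀ hmne
  rw [h1, h2]
  nlinarith [mul_pos hc (show (0:ℝ) < m by positivity)]
end

section
/- Let f(x,y) be jointly convex and strictly convex in each variable separately, and suppose g(a,b) = min_x [f(x,a) + f(x,b)] exists for all a,b. Then g is jointly convex and strictly convex in each variable separately. -/
lemma mid_mem {E : Type*} [AddCommGroup E] [Module ℝ E]
    {C : Set E} (hC : Convex ℝ C) {x y : E} (hx : x ∈ C) (hy : y ∈ C) :
    (2:ℝ)⁻¹ • (x + y) ∈ C := by
  have := hC hx hy (by norm_num : (0:ℝ) ≤ 2⁻¹) (by norm_num : (0:ℝ) ≤ 2⁻¹) (by norm_num)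
  simpa [smul_add] using this

lemma mid_self {E : Type*} [AddCommGroup E] [Module ℝ E] (x : E) :
    (2:ℝ)⁻¹ • (x + x) = x := by
  rw [← two_smul ℝ x, smul_smul]; norm_num

/-- If `f(x,y)` is jointly (midpoint) convex on a convex set `C` and strictly convex in each
variable separately, and `g(a,b) = min_x [f(x,a) + f(x,b)]` is attained for all `a, b ∈ C`, then
`g` is jointly convex and strictly convex in each variable separately. -/
theorem stmt18 {E : Type*} [AddCommGroup E] [Module ℝ E]
    (C : Set E) (hC : Convex ℝ C) (f g : E → E → ℝ)
    (hjc : ∀ x₁ ∈ C, ∀ y₁ ∈ C, ∀ x₂ ∈ C, ∀ y₂ ∈ C,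
      f ((2:ℝ)⁻¹ • (x₁ + x₂)) ((2:ℝ)⁻¹ • (y₁ + y₂)) ≤ (f x₁ y₁ + f x₂ y₂) / 2)
    (hs1 : ∀ x₁ ∈ C, ∀ x₂ ∈ C, ∀ y ∈ C, x₁ ≠ x₂ →
      f ((2:ℝ)⁻¹ • (x₁ + x₂)) y < (f x₁ y + f x₂ y) / 2)
    (hs2 : ∀ x ∈ C, ∀ y₁ ∈ C, ∀ y₂ ∈ C, y₁ ≠ y₂ →
      f x ((2:ℝ)⁻¹ • (y₁ + y₂)) < (f x y₁ + f x y₂) / 2)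
    (hg : ∀ a ∈ C, ∀ b ∈ C, ∃ x ∈ C,
      g a b = f x a + f x b ∧ ∀ x' ∈ C, g a b ≤ f x' a + f x' b) :
    (∀ a₁ ∈ C, ∀ b₁ ∈ C, ∀ a₂ ∈ C, ∀ b₂ ∈ C,
      g ((2:ℝ)⁻¹ • (a₁ + a₂)) ((2:ℝ)⁻¹ • (b₁ + b₂)) ≤ (g a₁ b₁ + g a₂ b₂) / 2) ∧
    (∀ a₁ ∈ C, ∀ a₂ ∈ C, ∀ b ∈ C, a₁ ≠ a₂ →
      g ((2:ℝ)⁻¹ • (a₁ + a₂)) b < (g a₁ b + g a₂ b) / 2) ∧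
    (∀ a ∈ C, ∀ b₁ ∈ C, ∀ b₂ ∈ C, b₁ ≠ b₂ →
      g a ((2:ℝ)⁻¹ • (b₁ + b₂)) < (g a b₁ + g a b₂) / 2) := by
  refine ⟨?_, ?_, ?_⟩
  · intro a₁ ha₁ b₁ hb₁ a₂ ha₂ b₂ hb₂
    obtain ⟨x₁, hx₁, hgx₁, _⟩ := hg a₁ ha₁ b₁ hb₁
    obtain ⟨x₂, hx₂, hgx₂, _⟩ := hg a₂ ha₂ b₂ hb₂
    obtain ⟨x, hx, hgx, hmin⟩ := hg _ (mid_mem hC ha₁ ha₂) _ (mid_mem hC hb₁ hb₂)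
    have hm := mid_mem hC hx₁ hx₂
    have h1 := hjc x₁ hx₁ a₁ ha₁ x₂ hx₂ a₂ ha₂
    have h2 := hjc x₁ hx₁ b₁ hb₁ x₂ hx₂ b₂ hb₂
    have := hmin _ hm
    rw [hgx₁, hgx₂]
    linarith
  · intro a₁ ha₁ a₂ ha₂ b hb hne
    obtain ⟨x₁, hx₁, hgx₁, _⟩ := hg a₁ ha₁ b hb
    obtain ⟨x₂, hx₂, hgx₂, _⟩ := hg a₂ ha₂ b hb
    obtain ⟨x, hx, hgx, hmin⟩ := hg _ (mid_mem hC ha₁ ha₂) b hb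
    have hm := mid_mem hC hx₁ hx₂
    have hle := hmin _ hm
    rw [hgx₁, hgx₂]
    by_cases hxe : x₁ = x₂
    · subst hxe
      have h1 := hs2 x₁ hx₁ a₁ ha₁ a₂ ha₂ hne
      have h2 : f ((2:ℝ)⁻¹ • (x₁ + x₁)) a₁ = f x₁ a₁ := by rw [mid_self]
      have h3 : f ((2:ℝ)⁻¹ • (x₁ + x₁)) b = f x₁ b := by rw [mid_self]
      have h4 : f ((2:ℝ)⁻¹ • (x₁ + x₁)) ((2:ℝ)⁻¹ • (a₁ + a₂)) =
          f x₁ ((2:ℝ)⁻¹ • (a₁ + a₂)) := by rw [mid_self]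
      rw [h4, h3] at hle
      linarith
    · have h1 := hjc x₁ hx₁ a₁ ha₁ x₂ hx₂ a₂ ha₂
      have h2 := hs1 x₁ hx₁ x₂ hx₂ b hb hxe
      linarith
  · intro a ha b₁ hb₁ b₂ hb₂ hne
    obtain ⟨x₁, hx₁, hgx₁, _⟩ := hg a ha b₁ hb₁
    obtain ⟨x₂, hx₂, hgx₂, _⟩ := hg a ha b₂ hb₂
    obtain ⟨x, hx, hgx, hmin⟩ := hg a ha _ (mid_mem hC hb₁ hb₂)
    have hm := mid_mem hC hx₁ hx₂
    have hle := hmin _ hm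
    rw [hgx₁, hgx₂]
    by_cases hxe : x₁ = x₂
    · subst hxe
      have h1 := hs2 x₁ hx₁ b₁ hb₁ b₂ hb₂ hne
      have h3 : f ((2:ℝ)⁻¹ • (x₁ + x₁)) a = f x₁ a := by rw [mid_self]
      have h4 : f ((2:ℝ)⁻¹ • (x₁ + x₁)) ((2:ℝ)⁻¹ • (b₁ + b₂)) =
          f x₁ ((2:ℝ)⁻¹ • (b₁ + b₂)) := by rw [mid_self]
      rw [h4, h3] at hle
      linarith
    · have h1 := hjc x₁ hx₁ b₁ hb₁ x₂ hx₂ b₂ hb₂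
      have h2 := hs1 x₁ hx₁ x₂ hx₂ a ha hxe
      linarith
end
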